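/- arXiv:1702.08274 — 3 statements merged into one kernel-verified Lean document; each statement's English description precedes it below -/
import Mathlib

section
/- Let F be an entire function with ‖F‖_{𝓛₁} := ∫_ℂ |F(z)| e^{-π|z|²/2} dA(z) < ∞, let Δ ⊆ ℂ be measurable, and let R > 0. Then ∫_Δ |F(z)| e^{-π|z|²/2} dA(z) ≤ ρ(Δ, R)/(1 - e^{-π/R²}) · ‖F‖_{𝓛₁}, where ρ(Δ, R) = sup_{w ∈ ℂ} |Δ ∩ (w + D_{1/R})|. -/
/-!
Multiplying `F` by `exp (π (|w|² / 2 - w̄ z))` recentres the Gaussian weight at `w` without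
changing `|F z| e^{-π|z|²/2}`. The modulus of the resulting entire function is subharmonic, so its
circle averages about `w` dominate its value at `w`; integrating them in polar coordinates against
the radial Gaussian gives the local estimate
`(1 - e^{-π/R²}) |F w| e^{-π|w|²/2} ≤ ∫_{w + D_{1/R}} |F| e^{-π|z|²/2}`
(in fact with the better constant `2 (1 - e^{-π/(2R²)})`). Integrating this over `w ∈ Δ` and
exchanging the order of integration, each `z` is counted with weight
`|Δ ∩ (z + D_{1/R})| ≤ ρ(Δ, R)`.
-/

open MeasureTheory

/-- Planar maximum Nyquist density (the plane identified with `ℂ`). -/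
noncomputable def planarRho (Δ : Set ℂ) (R : ℝ) : ENNReal :=
  ⨆ z : ℂ, volume (Δ ∩ Metric.closedBall z (1 / R))

open Metric Set Real
open scoped ENNReal ComplexConjugate

section CircleAverage

variable {E : Type*} [NormedAddCommGroup E]

theorem norm_le_circleAverage_norm [NormedSpace ℂ E] [CompleteSpace E] {f : ℂ → E} {c : ℂ}
    {R : ℝ} (hf : DiffContOnCl ℂ f (ball c |R|)) :
    ‖f c‖ ≤ circleAverage (‖f ·‖) c R := by
  rw [← hf.circleAverage, circleAverage_def, circleAverage_def, norm_smul,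
    Real.norm_of_nonneg (by positivity), smul_eq_mul]
  gcongr
  exact intervalIntegral.norm_integral_le_integral_norm two_pi_pos.le

variable [NormedSpace ℝ E]

theorem setIntegral_Ioo_circleMap_eq (f : ℂ → E) (c : ℂ) (R : ℝ) :
    ∫ θ in Ioo (-π) π, f (circleMap c R θ) = (2 * π) • circleAverage f c R := by
  have hper : Function.Periodic (fun θ => f (circleMap c R θ)) (2 * π) :=
    fun θ => by simp [periodic_circleMap c R θ]
  rw [circleAverage_def, smul_inv_smul₀ two_pi_pos.ne', ← integral_Ioc_eq_integral_Ioo,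
    ← intervalIntegral.integral_of_le (by linarith [pi_pos]),
    ← zero_add (2 * π), hper.intervalIntegral_add_eq 0 (-π)]
  ring_nf

theorem setIntegral_closedBall_eq_integral_circleAverage [CompleteSpace E] {f : ℂ → E}
    (hf : Continuous f) (c : ℂ) {r : ℝ} (hr : 0 ≤ r) :
    ∫ z in closedBall c r, f z = (2 * π) • ∫ s in 0..r, s • circleAverage f c s := by
  set T : Set (ℝ × ℝ) := Ioc 0 r ×ˢ Ioo (-π) π
  have hT : T ⊆ polarCoord.target := prod_mono Ioc_subset_Ioi_self subset_rfl
  have hpolar : ∀ p ∈ polarCoord.target,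
      p.1 • (closedBall c r).indicator f (c + Complex.polarCoord.symm p)
        = T.indicator (fun p => p.1 • f (circleMap c p.1 p.2)) p := by
    rintro ⟨s, θ⟩ ⟨hs : 0 < s, hθ⟩
    have hcirc : c + Complex.polarCoord.symm (s, θ) = circleMap c s θ := by
      rw [Complex.polarCoord_symm_apply, circleMap, Complex.exp_mul_I,
        Complex.ofReal_cos, Complex.ofReal_sin]
    have hmem : circleMap c s θ ∈ closedBall c r ↔ (s, θ) ∈ T := by
      simp [T, dist_eq_norm, circleMap_sub_center, abs_of_pos hs, hs, hθ]
    by_cases h : (s, θ) ∈ T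
    · rw [hcirc, indicator_of_mem (hmem.2 h), indicator_of_mem h]
    · rw [hcirc, indicator_of_notMem (mt hmem.1 h), indicator_of_notMem h, smul_zero]
  have hint : IntegrableOn (fun p : ℝ × ℝ => p.1 • f (circleMap c p.1 p.2)) T
      (volume.prod volume) := by
    refine (ContinuousOn.integrableOn_compact (isCompact_Icc.prod isCompact_Icc) ?_).mono_set
      (prod_mono Ioc_subset_Icc_self Ioo_subset_Icc_self)
    exact Continuous.continuousOn (by fun_prop)
  calc ∫ z in closedBall c r, f z
      = ∫ u, (closedBall c r).indicator f (c + u) := by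
        rw [← integral_indicator measurableSet_closedBall, integral_add_left_eq_self]
    _ = ∫ p in T, p.1 • f (circleMap c p.1 p.2) := by
        rw [← Complex.integral_comp_polarCoord_symm,
          setIntegral_congr_fun polarCoord.open_target.measurableSet hpolar,
          setIntegral_indicator (measurableSet_Ioc.prod measurableSet_Ioo),
          inter_eq_self_of_subset_right hT]
    _ = ∫ s in Ioc 0 r, s • ∫ θ in Ioo (-π) π, f (circleMap c s θ) := by
        rw [Measure.volume_eq_prod, setIntegral_prod _ hint]
        simp_rw [integral_smul]
    _ = (2 * π) • ∫ s in 0..r, s • circleAverage f c s := by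
        simp_rw [setIntegral_Ioo_circleMap_eq, smul_comm _ (2 * π)]
        rw [integral_smul, intervalIntegral.integral_of_le hr]

end CircleAverage

theorem integral_mul_exp_neg_mul_sq {b : ℝ} (hb : b ≠ 0) (r : ℝ) :
    ∫ s in 0..r, s * exp (-b * s ^ 2) = (1 - exp (-b * r ^ 2)) / (2 * b) := by
  have hderiv : ∀ s ∈ uIcc 0 r,
      HasDerivAt (fun t => -exp (-b * t ^ 2) / (2 * b)) (s * exp (-b * s ^ 2)) s := by
    intro s _
    refine ((((hasDerivAt_pow 2 s).const_mul (-b)).exp.neg).div_const (2 * b)).congr_deriv ?_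
    field_simp
    ring
  rw [intervalIntegral.integral_eq_sub_of_hasDerivAt hderiv
    ((by fun_prop : Continuous _).intervalIntegrable _ _)]
  simp only [zero_pow two_ne_zero, mul_zero, exp_zero]
  field_simp
  ring

section GaussianMeanValue

variable {E : Type*} [NormedAddCommGroup E] [NormedSpace ℂ E] [CompleteSpace E]

theorem mul_norm_le_setIntegral_closedBall_mul_exp {H : ℂ → E} (hH : Differentiable ℂ H)
    (w : ℂ) {b r : ℝ} (hb : b ≠ 0) (hr : 0 ≤ r) :
    π / b * (1 - exp (-b * r ^ 2)) * ‖H w‖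
      ≤ ∫ z in closedBall w r, ‖H z‖ * exp (-b * ‖z - w‖ ^ 2) := by
  have hHc := hH.continuous
  have hcircle : ∀ s, circleAverage (fun z => ‖H z‖ * exp (-b * ‖z - w‖ ^ 2)) w s
      = exp (-b * s ^ 2) * circleAverage (‖H ·‖) w s := by
    intro s
    rw [← smul_eq_mul, ← circleAverage_fun_smul]
    refine circleAverage_congr_sphere fun z hz => ?_
    rw [mem_sphere_iff_norm.1 hz, sq_abs, smul_eq_mul, mul_comm]
  have hmono : ∀ s ∈ Icc 0 r,
      s * exp (-b * s ^ 2) * ‖H w‖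
        ≤ s * circleAverage (fun z => ‖H z‖ * exp (-b * ‖z - w‖ ^ 2)) w s := by
    rintro s ⟨hs, -⟩
    rw [hcircle, ← mul_assoc]
    exact mul_le_mul_of_nonneg_left (norm_le_circleAverage_norm hH.diffContOnCl) (by positivity)
  rw [setIntegral_closedBall_eq_integral_circleAverage (by fun_prop) w hr, smul_eq_mul]
  calc π / b * (1 - exp (-b * r ^ 2)) * ‖H w‖
      = 2 * π * ∫ s in 0..r, s * exp (-b * s ^ 2) * ‖H w‖ := by
        rw [intervalIntegral.integral_mul_const, integral_mul_exp_neg_mul_sq hb]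
        field_simp
    _ ≤ _ := by
        gcongr
        exact intervalIntegral.integral_mono_on hr
          ((by fun_prop : Continuous _).intervalIntegrable _ _)
          ((by fun_prop : Continuous _).intervalIntegrable _ _) hmono

theorem norm_cexp_mul_exp_neg_mul_norm_sub_sq (b : ℝ) (w z : ℂ) :
    ‖Complex.exp (b * (‖w‖ ^ 2 - 2 * conj w * z))‖ * exp (-b * ‖z - w‖ ^ 2)
      = exp (-b * ‖z‖ ^ 2) := by
  rw [Complex.norm_exp, ← exp_add, ← Complex.ofReal_pow]
  congr 1
  simp only [Complex.sq_norm, Complex.normSq_apply, Complex.mul_re, Complex.mul_im,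
    Complex.sub_re, Complex.sub_im, Complex.ofReal_re, Complex.ofReal_im, Complex.conj_re,
    Complex.conj_im, Complex.re_ofNat, Complex.im_ofNat]
  ring

theorem mul_norm_mul_exp_le_setIntegral_closedBall {F : ℂ → E} (hF : Differentiable ℂ F)
    (w : ℂ) {b r : ℝ} (hb : b ≠ 0) (hr : 0 ≤ r) :
    π / b * (1 - exp (-b * r ^ 2)) * (‖F w‖ * exp (-b * ‖w‖ ^ 2))
      ≤ ∫ z in closedBall w r, ‖F z‖ * exp (-b * ‖z‖ ^ 2) := by
  set H : ℂ → E := fun z => Complex.exp (b * (‖w‖ ^ 2 - 2 * conj w * z)) • F z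
  have hH : Differentiable ℂ H := by fun_prop
  have hHF : ∀ z, ‖H z‖ * exp (-b * ‖z - w‖ ^ 2) = ‖F z‖ * exp (-b * ‖z‖ ^ 2) := by
    intro z
    rw [norm_smul, mul_right_comm, norm_cexp_mul_exp_neg_mul_norm_sub_sq, mul_comm]
  have hHw : ‖H w‖ = ‖F w‖ * exp (-b * ‖w‖ ^ 2) := by simpa using hHF w
  simpa only [hHw, hHF] using mul_norm_le_setIntegral_closedBall_mul_exp hH w hb hr

end GaussianMeanValue

section DoubleCounting

variable {α : Type*} [PseudoMetricSpace α] [MeasurableSpace α] [OpensMeasurableSpace α]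
  [SecondCountableTopology α] (μ : Measure α) [SFinite μ] (Δ : Set α) (r : ℝ)

theorem lintegral_lintegral_closedBall_le {g : α → ℝ≥0∞} (hg : AEMeasurable g μ) :
    ∫⁻ w in Δ, ∫⁻ z in closedBall w r, g z ∂μ ∂μ
      ≤ (⨆ z, μ (Δ ∩ closedBall z r)) * ∫⁻ z, g z ∂μ := by
  set S : Set (α × α) := {p | dist p.1 p.2 ≤ r}
  have hS : MeasurableSet S := measurableSet_le (by fun_prop) measurable_const
  have hslice : ∀ w z, S.indicator (fun p => g p.2) (w, z)
      = (closedBall z r).indicator (fun _ => g z) w :=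
    fun w z => by by_cases h : dist w z ≤ r <;> simp [S, h]
  calc ∫⁻ w in Δ, ∫⁻ z in closedBall w r, g z ∂μ ∂μ
      = ∫⁻ w in Δ, ∫⁻ z, S.indicator (fun p => g p.2) (w, z) ∂μ ∂μ := by
        refine lintegral_congr fun w => ?_
        rw [← lintegral_indicator measurableSet_closedBall]
        congr with z
        by_cases h : dist w z ≤ r <;> simp [S, h, dist_comm]
    _ = ∫⁻ z, ∫⁻ w in Δ, S.indicator (fun p => g p.2) (w, z) ∂μ ∂μ :=
        lintegral_lintegral_swap (hg.comp_snd.indicator hS)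
    _ = ∫⁻ z, μ (Δ ∩ closedBall z r) * g z ∂μ := by
        refine lintegral_congr fun z => ?_
        simp_rw [hslice]
        rw [lintegral_indicator_const measurableSet_closedBall,
          Measure.restrict_apply measurableSet_closedBall, inter_comm, mul_comm]
    _ ≤ ∫⁻ z, (⨆ z, μ (Δ ∩ closedBall z r)) * g z ∂μ :=
        lintegral_mono fun z => mul_le_mul_left (le_iSup (fun z => μ (Δ ∩ closedBall z r)) z) _
    _ = _ := lintegral_const_mul'' _ hg

theorem mul_setIntegral_le_of_le_setIntegral_closedBall {G : α → ℝ} (hG : Integrable G μ)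
    (hG0 : 0 ≤ G) {c : ℝ} (hc : 0 ≤ c)
    (hloc : ∀ w, c * G w ≤ ∫ z in closedBall w r, G z ∂μ)
    (hρ : (⨆ z, μ (Δ ∩ closedBall z r)) ≠ ∞) :
    c * ∫ z in Δ, G z ∂μ
      ≤ (⨆ z, μ (Δ ∩ closedBall z r)).toReal * ∫ z, G z ∂μ := by
  have hG0' : ∀ ν : Measure α, 0 ≤ᵐ[ν] G := fun ν => Filter.Eventually.of_forall hG0
  refine (ENNReal.ofReal_le_ofReal_iff
    (mul_nonneg ENNReal.toReal_nonneg (integral_nonneg hG0))).1 ?_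
  calc ENNReal.ofReal (c * ∫ z in Δ, G z ∂μ)
      = ∫⁻ w in Δ, ENNReal.ofReal c * ENNReal.ofReal (G w) ∂μ := by
        rw [ENNReal.ofReal_mul hc, lintegral_const_mul' _ _ ENNReal.ofReal_ne_top,
          ofReal_integral_eq_lintegral_ofReal hG.integrableOn (hG0' _)]
    _ ≤ ∫⁻ w in Δ, ∫⁻ z in closedBall w r, ENNReal.ofReal (G z) ∂μ ∂μ := by
        refine lintegral_mono fun w => ?_
        rw [← ENNReal.ofReal_mul hc,
          ← ofReal_integral_eq_lintegral_ofReal hG.integrableOn (hG0' _)]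
        exact ENNReal.ofReal_le_ofReal (hloc w)
    _ ≤ (⨆ z, μ (Δ ∩ closedBall z r)) * ∫⁻ z, ENNReal.ofReal (G z) ∂μ :=
        lintegral_lintegral_closedBall_le μ Δ r hG.aemeasurable.ennreal_ofReal
    _ = _ := by
        rw [ENNReal.ofReal_mul ENNReal.toReal_nonneg, ENNReal.ofReal_toReal hρ,
          ofReal_integral_eq_lintegral_ofReal hG (hG0' _)]

end DoubleCounting

theorem one_sub_exp_neg_two_mul_le (x : ℝ) : 1 - exp (-(2 * x)) ≤ 2 * (1 - exp (-x)) := by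
  have h : exp (-(2 * x)) = exp (-x) ^ 2 := by rw [← exp_nat_mul]; ring_nf
  nlinarith [sq_nonneg (1 - exp (-x))]

theorem planarRho_ne_top (Δ : Set ℂ) (R : ℝ) : planarRho Δ R ≠ ⊤ := by
  refine ne_top_of_le_ne_top
    (measure_closedBall_lt_top (μ := volume) (x := (0 : ℂ)) (r := 1 / R)).ne ?_
  refine iSup_le fun z => (measure_mono inter_subset_right).trans_eq ?_
  exact Measure.addHaar_closedBall_center volume z (1 / R)

theorem planar_large_sieve_fock_general (F : ℂ → ℂ) (hF : Differentiable ℂ F)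
    (hF1 : Integrable (fun z : ℂ => ‖F z‖ * Real.exp (-Real.pi * ‖z‖ ^ 2 / 2)))
    (Δ : Set ℂ) (R : ℝ) (hR : 0 < R) :
    ∫ z in Δ, ‖F z‖ * Real.exp (-Real.pi * ‖z‖ ^ 2 / 2)
      ≤ (planarRho Δ R).toReal / (1 - Real.exp (-Real.pi / R ^ 2)) *
        ∫ z : ℂ, ‖F z‖ * Real.exp (-Real.pi * ‖z‖ ^ 2 / 2) := by
  have hc : 0 < 1 - exp (-π / R ^ 2) := by
    rw [sub_pos, exp_lt_one_iff, neg_div, neg_lt_zero]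
    positivity
  have hconst : 1 - exp (-π / R ^ 2) ≤ π / (π / 2) * (1 - exp (-(π / 2) * (1 / R) ^ 2)) :=
    calc 1 - exp (-π / R ^ 2) = 1 - exp (-(2 * (π / 2 * (1 / R) ^ 2))) := by field_simp
      _ ≤ 2 * (1 - exp (-(π / 2 * (1 / R) ^ 2))) := one_sub_exp_neg_two_mul_le _
      _ = π / (π / 2) * (1 - exp (-(π / 2) * (1 / R) ^ 2)) := by field_simp
  have hloc : ∀ w, (1 - exp (-π / R ^ 2)) * (‖F w‖ * exp (-π * ‖w‖ ^ 2 / 2))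
      ≤ ∫ z in closedBall w (1 / R), ‖F z‖ * exp (-π * ‖z‖ ^ 2 / 2) := by
    intro w
    simp only [show ∀ x : ℝ, -π * x / 2 = -(π / 2) * x from fun x => by ring]
    refine le_trans ?_ (mul_norm_mul_exp_le_setIntegral_closedBall hF w
      (b := π / 2) (by positivity) (by positivity))
    gcongr
  have h := mul_setIntegral_le_of_le_setIntegral_closedBall volume Δ (1 / R) hF1
    (fun z => by positivity) hc.le hloc (planarRho_ne_top Δ R)
  rwa [div_mul_eq_mul_div, le_div_iff₀ hc, mul_comm]

/-- Planar large sieve inequality in Fock space (Theorem 1, Fock form):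
`∫_Δ |F| e^{-π|z|²/2} dA ≤ ρ(Δ,R)/(1 - e^{-π/R²}) · ‖F‖_{𝓛₁}`. -/
theorem planar_large_sieve_fock (F : ℂ → ℂ) (hF : Differentiable ℂ F)
    (hF1 : Integrable (fun z : ℂ => ‖F z‖ * Real.exp (-Real.pi * ‖z‖ ^ 2 / 2)))
    (Δ : Set ℂ) (hΔ : MeasurableSet Δ) (R : ℝ) (hR : 0 < R) :
    ∫ z in Δ, ‖F z‖ * Real.exp (-Real.pi * ‖z‖ ^ 2 / 2)
      ≤ (planarRho Δ R).toReal / (1 - Real.exp (-Real.pi / R ^ 2)) *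
        ∫ z : ℂ, ‖F z‖ * Real.exp (-Real.pi * ‖z‖ ^ 2 / 2) :=
  planar_large_sieve_fock_general F hF hF1 Δ R hR
end

section
/- Suppose Δ ⊆ ℂ is measurable with δ(Δ) := sup_{0 ≠ F ∈ 𝓕₁(ℂ)} (∫_Δ |F| e^{-π|z|²/2} dA) / ‖F‖_{𝓛₁} < 1/2. Let f ∈ 𝓕₁(ℂ) and let N ∈ L¹(ℂ, e^{-π|z|²/2} dA) be supported on Δ, and set G = f + N. Then f is the unique minimizer over g ∈ 𝓕₁(ℂ) of ‖G - g‖_{𝓛₁} = ∫_ℂ |G(z) - g(z)| e^{-π|z|²/2} dA(z). -/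
/-! With `h = f - g ≠ 0` in `𝓕₁`, the definition of `δ(Δ)` gives `∫_Δ |h| < ‖h‖ / 2`. As `N` vanishes
off `Δ`, `‖N + h‖ ≥ (‖N‖_Δ - ‖h‖_Δ) + ‖h‖_{Δᶜ} = ‖N‖ + ‖h‖ - 2 ‖h‖_Δ > ‖N‖`; this step holds for any
measure and is applied to the Gaussian-weighted area measure. -/

open MeasureTheory

/-- Gaussian-weighted L¹ (Fock) norm. -/
noncomputable def fockNorm (F : ℂ → ℂ) : ℝ :=
  ∫ z : ℂ, ‖F z‖ * Real.exp (-Real.pi * ‖z‖ ^ 2 / 2)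

/-- Membership in the Fock space `𝓕₁(ℂ)`: entire with finite weighted L¹ norm. -/
def MemFock1 (F : ℂ → ℂ) : Prop :=
  Differentiable ℂ F ∧
    Integrable (fun z : ℂ => ‖F z‖ * Real.exp (-Real.pi * ‖z‖ ^ 2 / 2))

/-- `δ(Δ) = sup_{0 ≠ F ∈ 𝓕₁} (∫_Δ |F| e^{-π|z|²/2} dA)/‖F‖_{𝓛₁}`. -/
noncomputable def fockDelta (Δ : Set ℂ) : ℝ :=
  ⨆ F : {F : ℂ → ℂ // MemFock1 F ∧ F ≠ 0},
    (∫ z in Δ, ‖F.1 z‖ * Real.exp (-Real.pi * ‖z‖ ^ 2 / 2)) / fockNorm F.1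

section L1Recovery

variable {α E : Type*} [MeasurableSpace α] [NormedAddCommGroup E] {μ : Measure α} {s : Set α}

theorem integral_norm_lt_integral_norm_add (hs : MeasurableSet s) {n h : α → E}
    (hn : Integrable n μ) (hh : Integrable h μ) (hns : ∀ᵐ x ∂μ, x ∉ s → n x = 0)
    (hconc : 2 * ∫ x in s, ‖h x‖ ∂μ < ∫ x, ‖h x‖ ∂μ) :
    ∫ x, ‖n x‖ ∂μ < ∫ x, ‖n x + h x‖ ∂μ := by
  have hnh : Integrable (fun x => ‖n x + h x‖) μ := (hn.add hh).norm
  have hn_on : ∫ x in s, ‖n x‖ ∂μ = ∫ x, ‖n x‖ ∂μ :=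
    setIntegral_eq_integral_of_ae_compl_eq_zero <| by
      filter_upwards [hns] with x hx hxs
      simp [hx hxs]
  have hnh_off : ∫ x in sᶜ, ‖n x + h x‖ ∂μ = ∫ x in sᶜ, ‖h x‖ ∂μ := by
    refine setIntegral_congr_ae hs.compl ?_
    filter_upwards [hns] with x hx hxs
    simp [hx hxs]
  have hnh_on : ∫ x in s, ‖n x‖ ∂μ - ∫ x in s, ‖h x‖ ∂μ ≤ ∫ x in s, ‖n x + h x‖ ∂μ := by
    rw [← integral_sub hn.norm.restrict hh.norm.restrict]
    refine integral_mono (hn.norm.restrict.sub hh.norm.restrict) hnh.restrict fun x => ?_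
    simpa using norm_sub_norm_le (n x) (-h x)
  linarith [integral_add_compl hs hnh, integral_add_compl hs hh.norm]

end L1Recovery

section FockSpace

noncomputable def fockMeasure : Measure ℂ :=
  volume.withDensity fun z => ENNReal.ofReal (Real.exp (-Real.pi * ‖z‖ ^ 2 / 2))

theorem measurable_fockDensity :
    Measurable fun z : ℂ => ENNReal.ofReal (Real.exp (-Real.pi * ‖z‖ ^ 2 / 2)) := by
  fun_prop

theorem integral_fockMeasure_eq (F : ℂ → ℂ) :
    ∫ z, ‖F z‖ ∂fockMeasure = fockNorm F := by
  rw [fockMeasure, integral_withDensity_eq_integral_toReal_smul measurable_fockDensity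
    (by simp), fockNorm]
  simp only [ENNReal.toReal_ofReal (Real.exp_pos _).le, smul_eq_mul, mul_comm]

theorem setIntegral_fockMeasure_eq (F : ℂ → ℂ) {Δ : Set ℂ} (hΔ : MeasurableSet Δ) :
    ∫ z in Δ, ‖F z‖ ∂fockMeasure = ∫ z in Δ, ‖F z‖ * Real.exp (-Real.pi * ‖z‖ ^ 2 / 2) := by
  rw [fockMeasure, restrict_withDensity hΔ, integral_withDensity_eq_integral_toReal_smul
    measurable_fockDensity (by simp)]
  simp only [ENNReal.toReal_ofReal (Real.exp_pos _).le, smul_eq_mul, mul_comm]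

theorem ae_fockMeasure_of_ae {p : ℂ → Prop} (hp : ∀ᵐ z, p z) : ∀ᵐ z ∂fockMeasure, p z :=
  (withDensity_absolutelyContinuous _ _).ae_le hp

theorem integrable_fockMeasure_iff {F : ℂ → ℂ} (hF : AEStronglyMeasurable F) :
    Integrable F fockMeasure ↔
      Integrable fun z => ‖F z‖ * Real.exp (-Real.pi * ‖z‖ ^ 2 / 2) := by
  rw [fockMeasure, integrable_withDensity_iff_integrable_smul' measurable_fockDensity (by simp)]
  simp only [ENNReal.toReal_ofReal (Real.exp_pos _).le]
  rw [← integrable_norm_iff (by fun_prop)]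
  simp only [norm_smul, Real.norm_eq_abs, abs_of_pos (Real.exp_pos _), mul_comm]

namespace MemFock1

variable {F : ℂ → ℂ}

theorem integrable (hF : MemFock1 F) : Integrable F fockMeasure :=
  (integrable_fockMeasure_iff hF.1.continuous.aestronglyMeasurable).2 hF.2

theorem sub {g : ℂ → ℂ} (hF : MemFock1 F) (hg : MemFock1 g) : MemFock1 (F - g) := by
  refine ⟨hF.1.sub hg.1, ?_⟩
  rw [← integrable_fockMeasure_iff (hF.1.sub hg.1).continuous.aestronglyMeasurable]
  exact hF.integrable.sub hg.integrable

theorem fockNorm_pos (hF : MemFock1 F) (hF0 : F ≠ 0) : 0 < fockNorm F := by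
  obtain ⟨z, hz⟩ := Function.ne_iff.1 hF0
  exact integral_pos_of_integrable_nonneg_nonzero (x := z) (hF.1.continuous.norm.mul (by fun_prop)) hF.2
    (fun z => by positivity) (mul_ne_zero (norm_ne_zero_iff.2 hz) (Real.exp_pos _).ne')

theorem setIntegral_le_fockNorm (hF : MemFock1 F) (Δ : Set ℂ) :
    ∫ z in Δ, ‖F z‖ * Real.exp (-Real.pi * ‖z‖ ^ 2 / 2) ≤ fockNorm F :=
  setIntegral_le_integral hF.2 (.of_forall fun z => by positivity)

end MemFock1

theorem bddAbove_fockRatio (Δ : Set ℂ) :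
    BddAbove (Set.range fun F : {F : ℂ → ℂ // MemFock1 F ∧ F ≠ 0} =>
      (∫ z in Δ, ‖F.1 z‖ * Real.exp (-Real.pi * ‖z‖ ^ 2 / 2)) / fockNorm F.1) := by
  refine ⟨1, ?_⟩
  rintro _ ⟨⟨F, hF, -⟩, rfl⟩
  exact div_le_one_of_le₀ (hF.setIntegral_le_fockNorm Δ) (integral_nonneg fun z => by positivity)

theorem MemFock1.setIntegral_le_fockDelta_mul {F : ℂ → ℂ} (hF : MemFock1 F) (hF0 : F ≠ 0)
    (Δ : Set ℂ) :
    ∫ z in Δ, ‖F z‖ * Real.exp (-Real.pi * ‖z‖ ^ 2 / 2) ≤ fockDelta Δ * fockNorm F := by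
  rw [← div_le_iff₀ (hF.fockNorm_pos hF0)]
  exact le_ciSup (bddAbove_fockRatio Δ) ⟨F, hF, hF0⟩

end FockSpace

/-- Perfect recovery from sparse noise (Corollary 1, Fock model): if `δ(Δ) < 1/2`,
`f ∈ 𝓕₁(ℂ)`, `N` is weighted-L¹ and supported on `Δ`, and `G = f + N` is observed,
then `f` is the unique minimizer of `g ↦ ‖G - g‖_{𝓛₁}` over `𝓕₁(ℂ)`. -/
theorem perfect_recovery_sparse_noise (Δ : Set ℂ) (hΔ : MeasurableSet Δ)
    (hδ : fockDelta Δ < 1 / 2)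
    (f : ℂ → ℂ) (hf : MemFock1 f)
    (N : ℂ → ℂ) (hNmeas : Measurable N)
    (hN1 : Integrable (fun z : ℂ => ‖N z‖ * Real.exp (-Real.pi * ‖z‖ ^ 2 / 2)))
    (hNsupp : ∀ᵐ z : ℂ, z ∉ Δ → N z = 0)
    (G : ℂ → ℂ) (hG : G = fun z => f z + N z) :
    ∀ g : ℂ → ℂ, MemFock1 g → g ≠ f →
      fockNorm (fun z => G z - f z) < fockNorm (fun z => G z - g z) := by
  intro g hg hgf
  have hh : MemFock1 (f - g) := hf.sub hg
  have hh0 : f - g ≠ 0 := sub_ne_zero.2 hgf.symm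
  have hconc : 2 * ∫ z in Δ, ‖(f - g) z‖ ∂fockMeasure < ∫ z, ‖(f - g) z‖ ∂fockMeasure := by
    rw [setIntegral_fockMeasure_eq _ hΔ, integral_fockMeasure_eq]
    nlinarith [hh.setIntegral_le_fockDelta_mul hh0 Δ, hh.fockNorm_pos hh0]
  have key := integral_norm_lt_integral_norm_add hΔ
    ((integrable_fockMeasure_iff hNmeas.aestronglyMeasurable).2 hN1) hh.integrable
    (ae_fockMeasure_of_ae hNsupp) hconc
  have hnoise : (fun z => G z - f z) = N := by
    funext z; simp only [hG]; ring
  have hresidual : (fun z => G z - g z) = N + (f - g) := by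
    funext z; simp only [hG, Pi.add_apply, Pi.sub_apply]; ring
  rwa [hnoise, hresidual, ← integral_fockMeasure_eq, ← integral_fockMeasure_eq]
end

section
/- The map F ↦ (1 - e^{-π/R²})^{-1} (F ∗ χ_{D_{1/R}}) is the identity on 𝓕₁(ℂ); in particular for every Φ ∈ 𝓕₁(ℂ), ‖Φ ∗ χ_{D_{1/R}}‖_{𝓛₁} = (1 - e^{-π/R²}) ‖Φ‖_{𝓛₁}, so ν(χ_{D_{1/R}}) := sup_{0≠Φ∈𝓕₁} ‖Φ‖_{𝓛₁}/‖Φ ∗ χ_{D_{1/R}}‖_{𝓛₁} = (1 - e^{-π/R²})^{-1}. -/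
open MeasureTheory

/-- Twisted Fock-space convolution. -/
noncomputable def tconv (F G : ℂ → ℂ) (z : ℂ) : ℂ :=
  ∫ w : ℂ, F w * G (z - w) *
    Complex.exp ((Real.pi : ℂ) * (z * (starRingEnd ℂ) w - ((‖w‖ : ℂ)) ^ 2))

open Metric Set Real

/-! Substituting `w = z + u`, the twisted convolution of `Φ` with the indicator of the disc of
radius `r` is `∫_{|u| ≤ r} e^{-π|u|²} Φ(z + u) e^{-π u z̄} du`. The second factor is entire in `u`,
so by the mean value property its average over each circle `|u| = ρ` is its value `Φ z` at `0`;
in polar coordinates the integral is therefore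
`Φ z · ∫_{|u| ≤ r} e^{-π|u|²} du = (1 - e^{-π r²}) Φ z`.
The other two claims follow because every ratio in the supremum equals `(1 - e^{-π/R²})⁻¹`. -/

section PolarCoordinates

variable {E : Type*} [NormedAddCommGroup E] [NormedSpace ℝ E]

theorem integral_Ioo_circleMap_eq_circleAverage (f : ℂ → E) (c : ℂ) (ρ : ℝ) :
    ∫ θ in Ioo (-π) π, f (circleMap c ρ θ) = (2 * π) • circleAverage f c ρ := by
  have hperiod : Function.Periodic (fun θ => f (circleMap c ρ θ)) (2 * π) :=
    (periodic_circleMap c ρ).comp f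
  have hshift := hperiod.intervalIntegral_add_eq (-π) 0
  rw [show -π + 2 * π = π by ring, zero_add] at hshift
  rw [← integral_Ioc_eq_integral_Ioo, ← intervalIntegral.integral_of_le (by linarith [pi_pos]),
    hshift, circleAverage_def, smul_inv_smul₀ (by positivity)]

theorem integral_closedBall_eq_integral_circleAverage {F : ℂ → E} {r : ℝ}
    (hF : ContinuousOn F (closedBall 0 r)) :
    ∫ u in closedBall (0 : ℂ) r, F u = ∫ ρ in Ioc 0 r, (2 * π * ρ) • circleAverage F 0 ρ := by
  have hpolar (p : ℝ × ℝ) : Complex.polarCoord.symm p = circleMap 0 p.1 p.2 := by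
    simp [circleMap, Complex.exp_mul_I, ← Complex.ofReal_cos, ← Complex.ofReal_sin]
  have hsub : Ioc 0 r ×ˢ Ioo (-π) π ⊆ polarCoord.target := by
    rw [polarCoord_target]
    exact prod_mono Ioc_subset_Ioi_self subset_rfl
  rw [← integral_indicator measurableSet_closedBall, ← Complex.integral_comp_polarCoord_symm,
    setIntegral_eq_of_subset_of_forall_sdiff_eq_zero polarCoord.open_target.measurableSet hsub ?_]
  · have hcircle : ∀ p ∈ Ioc 0 r ×ˢ Ioo (-π) π,
        p.1 • (closedBall 0 r).indicator F (Complex.polarCoord.symm p)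
          = p.1 • F (circleMap 0 p.1 p.2) := by
      rintro ⟨ρ, θ⟩ ⟨hρ, -⟩
      have hmem : circleMap 0 ρ θ ∈ closedBall (0 : ℂ) r := by
        simpa [abs_of_pos hρ.1] using hρ.2
      rw [hpolar, indicator_of_mem hmem]
    have hint : IntegrableOn (fun p : ℝ × ℝ => p.1 • F (circleMap 0 p.1 p.2))
        (Ioc 0 r ×ˢ Ioo (-π) π) := by
      refine (ContinuousOn.integrableOn_compact (isCompact_Icc.prod isCompact_Icc) ?_).mono_set
        (prod_mono Ioc_subset_Icc_self Ioo_subset_Icc_self)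
      refine continuousOn_fst.smul (hF.comp (by fun_prop) ?_)
      rintro ⟨ρ, θ⟩ ⟨hρ, -⟩
      simpa [abs_of_nonneg hρ.1] using hρ.2
    rw [setIntegral_congr_fun (measurableSet_Ioc.prod measurableSet_Ioo) hcircle,
      Measure.volume_eq_prod, setIntegral_prod _ hint]
    refine setIntegral_congr_fun measurableSet_Ioc fun ρ _ => ?_
    rw [integral_smul, integral_Ioo_circleMap_eq_circleAverage, smul_smul, mul_comm ρ]
  · rintro ⟨ρ, θ⟩ ⟨hmem, hnot⟩
    rw [polarCoord_target] at hmem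
    have hout : Complex.polarCoord.symm (ρ, θ) ∉ closedBall (0 : ℂ) r := by
      rw [mem_closedBall_zero_iff, Complex.norm_polarCoord_symm, abs_of_pos hmem.1]
      exact fun hle => hnot ⟨⟨hmem.1, hle⟩, hmem.2⟩
    simp only [indicator_of_notMem hout, smul_zero]

end PolarCoordinates

theorem integral_closedBall_radial_smul_eq_smul_apply_zero {E : Type*} [NormedAddCommGroup E]
    [NormedSpace ℂ E] [CompleteSpace E] {g : ℂ → E} {f : ℝ → ℝ} {r : ℝ}
    (hg : DifferentiableOn ℂ g (closedBall 0 r)) (hf : ContinuousOn f (Icc 0 r)) :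
    ∫ u in closedBall (0 : ℂ) r, f ‖u‖ • g u = (∫ ρ in Ioc 0 r, 2 * π * ρ * f ρ) • g 0 := by
  have hcont : ContinuousOn (fun u : ℂ => f ‖u‖ • g u) (closedBall 0 r) :=
    (hf.comp continuous_norm.continuousOn fun u hu =>
      ⟨norm_nonneg u, mem_closedBall_zero_iff.mp hu⟩).smul hg.continuousOn
  rw [integral_closedBall_eq_integral_circleAverage hcont, ← integral_smul_const]
  refine setIntegral_congr_fun measurableSet_Ioc fun ρ hρ => ?_
  have hsphere : EqOn (fun u : ℂ => f ‖u‖ • g u) (f ρ • g) (sphere 0 |ρ|) := fun u hu => by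
    simp [abs_of_pos hρ.1, mem_sphere_zero_iff_norm.mp hu]
  have hmean : circleAverage g 0 ρ = g 0 :=
    (hg.diffContOnCl_ball <| closedBall_subset_closedBall <| by
      simpa [abs_of_pos hρ.1] using hρ.2).circleAverage
  rw [circleAverage_congr_sphere hsphere, circleAverage_smul, hmean, smul_smul]

theorem integral_Ioc_mul_exp_neg_mul_sq (b : ℝ) {r : ℝ} (hr : 0 ≤ r) :
    ∫ ρ in Ioc 0 r, 2 * b * ρ * exp (-b * ρ ^ 2) = 1 - exp (-b * r ^ 2) := by
  have hderiv (ρ : ℝ) :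
      HasDerivAt (fun x => -exp (-b * x ^ 2)) (2 * b * ρ * exp (-b * ρ ^ 2)) ρ := by
    refine (((hasDerivAt_pow 2 ρ).const_mul (-b)).exp).fun_neg.congr_deriv ?_
    ring
  rw [← intervalIntegral.integral_of_le hr,
    intervalIntegral.integral_eq_sub_of_hasDerivAt (fun ρ _ => hderiv ρ)
      (by apply Continuous.intervalIntegrable; fun_prop)]
  simp only [ne_eq, OfNat.ofNat_ne_zero, not_false_eq_true, zero_pow, mul_zero, exp_zero]
  ring

theorem mul_conj_add_sub_norm_add_sq (z u : ℂ) :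
    z * (starRingEnd ℂ) (z + u) - (‖z + u‖ : ℂ) ^ 2
      = -(u * (starRingEnd ℂ) z) - (‖u‖ : ℂ) ^ 2 := by
  simp only [← Complex.ofReal_pow, Complex.sq_norm, Complex.normSq_eq_conj_mul_self, map_add]
  ring

theorem tconv_indicator_closedBall {Φ : ℂ → ℂ} (hΦ : Differentiable ℂ Φ) {r : ℝ} (hr : 0 ≤ r)
    (z : ℂ) :
    tconv Φ ((closedBall (0 : ℂ) r).indicator fun _ => 1) z
      = ((1 - exp (-π * r ^ 2) : ℝ) : ℂ) * Φ z := by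
  set g : ℂ → ℂ := fun u => Φ (z + u) * Complex.exp (-π * (u * (starRingEnd ℂ) z))
  have hg : Differentiable ℂ g := by fun_prop
  have hintegrand (u : ℂ) :
      Φ (z + u) * (closedBall (0 : ℂ) r).indicator (fun _ => 1) (z - (z + u))
          * Complex.exp (π * (z * (starRingEnd ℂ) (z + u) - (‖z + u‖ : ℂ) ^ 2))
        = (closedBall (0 : ℂ) r).indicator (fun u => exp (-π * ‖u‖ ^ 2) • g u) u := by
    rw [sub_add_cancel_left]
    by_cases hu : u ∈ closedBall (0 : ℂ) r
    · have hu' : -u ∈ closedBall (0 : ℂ) r := by simpa using hu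
      rw [indicator_of_mem hu, indicator_of_mem hu']
      simp only [g, mul_conj_add_sub_norm_add_sq, Complex.real_smul, Complex.ofReal_exp]
      rw [mul_one, mul_left_comm, ← Complex.exp_add]
      congr 2
      push_cast
      ring
    · have hu' : -u ∉ closedBall (0 : ℂ) r := by simpa using hu
      rw [indicator_of_notMem hu, indicator_of_notMem hu']
      simp
  rw [tconv, ← integral_add_left_eq_self _ z]
  simp_rw [hintegrand]
  rw [integral_indicator measurableSet_closedBall,
    integral_closedBall_radial_smul_eq_smul_apply_zero (f := fun ρ => exp (-π * ρ ^ 2))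
      hg.differentiableOn (by fun_prop),
    integral_Ioc_mul_exp_neg_mul_sq π hr, Complex.real_smul]
  simp [g]

theorem fockNorm_const_mul (c : ℂ) (F : ℂ → ℂ) :
    fockNorm (fun z => c * F z) = ‖c‖ * fockNorm F := by
  simp only [fockNorm, norm_mul, mul_assoc, integral_const_mul]

theorem memFock1_const (c : ℂ) : MemFock1 fun _ => c := by
  refine ⟨differentiable_const c, Integrable.const_mul ?_ ‖c‖⟩
  have hgauss := (GaussianFourier.integrable_cexp_neg_mul_sq_norm_add (V := ℂ)
    (b := ((π / 2 : ℝ) : ℂ)) (by simp [pi_pos]) 0 0).norm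
  refine hgauss.congr (ae_of_all _ fun z => ?_)
  simp only [zero_mul, add_zero, Complex.norm_exp]
  congr 1
  rw [← Complex.ofReal_pow, ← Complex.ofReal_neg, ← Complex.ofReal_mul, Complex.ofReal_re]
  ring

theorem MemFock1.fockNorm_pos_s14 {F : ℂ → ℂ} (hF : MemFock1 F) (hne : F ≠ 0) : 0 < fockNorm F := by
  rw [fockNorm, integral_pos_iff_support_of_nonneg (fun z => by positivity) hF.2]
  have hsupp : Function.support (fun z => ‖F z‖ * exp (-π * ‖z‖ ^ 2 / 2)) = {z | F z ≠ 0} := by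
    ext z
    simp [exp_ne_zero]
  obtain ⟨z, hz⟩ := Function.ne_iff.mp hne
  rw [hsupp]
  exact (isOpen_compl_singleton.preimage hF.1.continuous).measure_pos volume ⟨z, hz⟩

/-- `F ↦ (1 - e^{-π/R²})⁻¹ (F ∗ χ_{D_{1/R}})` is the identity on `𝓕₁(ℂ)`; in particular
`‖Φ ∗ χ_{D_{1/R}}‖_{𝓛₁} = (1 - e^{-π/R²}) ‖Φ‖_{𝓛₁}` and
`ν(χ_{D_{1/R}}) = sup_{0≠Φ} ‖Φ‖/‖Φ ∗ χ_{D_{1/R}}‖ = (1 - e^{-π/R²})⁻¹`. -/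
theorem tconv_disc_indicator_identity (R : ℝ) (hR : 0 < R) :
    (∀ Φ : ℂ → ℂ, MemFock1 Φ → ∀ z : ℂ,
        Φ z = ((1 - Real.exp (-Real.pi / R ^ 2) : ℝ) : ℂ)⁻¹ *
          tconv Φ ((Metric.closedBall (0 : ℂ) (1 / R)).indicator (fun _ => (1 : ℂ))) z)
    ∧ (∀ Φ : ℂ → ℂ, MemFock1 Φ →
        fockNorm (tconv Φ ((Metric.closedBall (0 : ℂ) (1 / R)).indicator (fun _ => (1 : ℂ))))
          = (1 - Real.exp (-Real.pi / R ^ 2)) * fockNorm Φ)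
    ∧ (⨆ Φ : {Φ : ℂ → ℂ // MemFock1 Φ ∧ Φ ≠ 0},
        fockNorm Φ.1 /
          fockNorm (tconv Φ.1 ((Metric.closedBall (0 : ℂ) (1 / R)).indicator (fun _ => (1 : ℂ)))))
        = (1 - Real.exp (-Real.pi / R ^ 2))⁻¹ := by
  set c : ℝ := 1 - exp (-π / R ^ 2)
  have hc : 0 < c :=
    sub_pos.mpr <| exp_lt_one_iff.mpr <| div_neg_of_neg_of_pos (neg_neg_of_pos pi_pos) (pow_pos hR 2)
  have hconv (Φ : ℂ → ℂ) (hΦ : MemFock1 Φ) :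
      tconv Φ ((closedBall (0 : ℂ) (1 / R)).indicator fun _ => 1) = fun z => (c : ℂ) * Φ z := by
    funext z
    rw [tconv_indicator_closedBall hΦ.1 (by positivity), div_pow, one_pow, mul_one_div]
  have hnorm (Φ : ℂ → ℂ) (hΦ : MemFock1 Φ) :
      fockNorm (tconv Φ ((closedBall (0 : ℂ) (1 / R)).indicator fun _ => 1)) = c * fockNorm Φ := by
    rw [hconv Φ hΦ, fockNorm_const_mul, Complex.norm_real, norm_of_nonneg hc.le]
  refine ⟨fun Φ hΦ z => ?_, hnorm, ?_⟩
  · rw [hconv Φ hΦ, inv_mul_cancel_left₀ (by exact_mod_cast hc.ne')]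
  · have : Nonempty {Φ : ℂ → ℂ // MemFock1 Φ ∧ Φ ≠ 0} :=
      ⟨⟨fun _ => 1, memFock1_const 1, fun h => one_ne_zero (congrFun h 0)⟩⟩
    refine (iSup_congr fun Φ => ?_).trans ciSup_const
    rw [hnorm Φ.1 Φ.2.1, div_mul_cancel_right₀ (Φ.2.1.fockNorm_pos_s14 Φ.2.2).ne']
end
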